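/- arXiv:2311.01801 — 2 statements merged into one kernel-verified Lean document; each statement's English description precedes it below -/
import Mathlib

section
/- For all complex numbers z₁, z₂ and all real numbers ε₁, ε₂ ≥ 0 one has |Im[ (conj(z₁ − z₂)) · ( z₁ log(|z₁| + ε₁) − z₂ log(|z₂| + ε₂) ) ]| ≤ |z₁ − z₂|² + |ε₁ − ε₂| · |z₁ − z₂|, where the expression z log(|z| + ε) is interpreted as 0 when z = 0 and ε = 0. -/
/-!
Write `w = z₁ - z₂`. Since `conj w * w` is real, the imaginary part in question equals
`(log x₁ - log x₂) * Im (conj w * z₂)` with `xᵢ = ‖zᵢ‖ + εᵢ`, and `Im (conj w * z₂) = Im (conj w * z₁)`,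
so it is at most `‖w‖ * m * |log x₁ - log x₂|` with `m = min ‖z₁‖ ‖z₂‖ ≤ min x₁ x₂`.
The bound `log t ≤ t - 1` gives `m * |log x₁ - log x₂| ≤ |x₁ - x₂| ≤ ‖w‖ + |ε₁ - ε₂|`.
-/

open ComplexConjugate

namespace Complex

theorem im_conj_sub_mul_sub_mul_ofReal (z₁ z₂ : ℂ) (a b : ℝ) :
    (conj (z₁ - z₂) * (z₁ * a - z₂ * b)).im = (a - b) * (conj (z₁ - z₂) * z₂).im := by
  simp only [mul_im, mul_re, sub_re, sub_im, conj_re, conj_im, ofReal_re, ofReal_im]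
  ring

theorem im_conj_sub_mul_left_eq_right (z₁ z₂ : ℂ) :
    (conj (z₁ - z₂) * z₁).im = (conj (z₁ - z₂) * z₂).im := by
  simp only [mul_im, sub_re, sub_im, conj_re, conj_im]
  ring

theorem abs_im_conj_sub_mul_le_norm_mul_min (z₁ z₂ : ℂ) :
    |(conj (z₁ - z₂) * z₂).im| ≤ ‖z₁ - z₂‖ * min ‖z₁‖ ‖z₂‖ := by
  have h : ∀ z, |(conj (z₁ - z₂) * z).im| ≤ ‖z₁ - z₂‖ * ‖z‖ := fun z ↦ by
    simpa only [norm_mul, norm_conj] using abs_im_le_norm (conj (z₁ - z₂) * z)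
  rw [mul_min_of_nonneg _ _ (norm_nonneg _)]
  exact le_min (im_conj_sub_mul_left_eq_right z₁ z₂ ▸ h z₁) (h z₂)

end Complex

namespace Real

theorem mul_abs_log_sub_log_le {m x y : ℝ} (hm : 0 ≤ m) (hmx : m ≤ x) (hmy : m ≤ y) :
    m * |log x - log y| ≤ |x - y| := by
  rcases hm.eq_or_lt with rfl | hm
  · simp
  wlog hyx : y ≤ x generalizing x y
  · simpa only [abs_sub_comm] using this hmy hmx (le_of_not_ge hyx)
  have hy : 0 < y := hm.trans_le hmy
  have hlog : log x - log y ≤ x / y - 1 := by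
    rw [← log_div (hy.trans_le hyx).ne' hy.ne']
    exact log_le_sub_one_of_pos (div_pos (hy.trans_le hyx) hy)
  rw [abs_of_nonneg (sub_nonneg.2 (log_le_log hy hyx)), abs_of_nonneg (sub_nonneg.2 hyx)]
  calc m * (log x - log y) ≤ y * (x / y - 1) :=
        mul_le_mul hmy hlog (sub_nonneg.2 (log_le_log hy hyx)) hy.le
    _ = x - y := by field_simp

end Real

theorem abs_add_sub_add_le_norm_sub_add_abs {E : Type*} [SeminormedAddCommGroup E] (z₁ z₂ : E)
    (ε₁ ε₂ : ℝ) :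
    |(‖z₁‖ + ε₁) - (‖z₂‖ + ε₂)| ≤ ‖z₁ - z₂‖ + |ε₁ - ε₂| :=
  calc |(‖z₁‖ + ε₁) - (‖z₂‖ + ε₂)| = |(‖z₁‖ - ‖z₂‖) + (ε₁ - ε₂)| := by ring_nf
    _ ≤ |‖z₁‖ - ‖z₂‖| + |ε₁ - ε₂| := abs_add_le _ _
    _ ≤ ‖z₁ - z₂‖ + |ε₁ - ε₂| := by gcongr; exact abs_norm_sub_norm_le z₁ z₂

/-- For all `z₁ z₂ : ℂ` and `ε₁ ε₂ ≥ 0`,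
`|Im[ conj(z₁ - z₂) * (z₁ log(|z₁|+ε₁) - z₂ log(|z₂|+ε₂)) ]|
  ≤ |z₁ - z₂|² + |ε₁ - ε₂|·|z₁ - z₂|`.
Since `Real.log 0 = 0`, the expression `z * log (|z| + ε)` equals `0` when `z = 0` and `ε = 0`. -/
theorem abs_im_conj_sub_mul_log_add_eps_le (z₁ z₂ : ℂ) (ε₁ ε₂ : ℝ)
    (hε₁ : 0 ≤ ε₁) (hε₂ : 0 ≤ ε₂) :
    |((starRingEnd ℂ) (z₁ - z₂) *
        (z₁ * (Real.log (‖z₁‖ + ε₁) : ℂ) -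
          z₂ * (Real.log (‖z₂‖ + ε₂) : ℂ))).im|
      ≤ ‖z₁ - z₂‖ ^ 2 + |ε₁ - ε₂| * ‖z₁ - z₂‖ := by
  set m := min ‖z₁‖ ‖z₂‖
  have hlog : m * |Real.log (‖z₁‖ + ε₁) - Real.log (‖z₂‖ + ε₂)| ≤ ‖z₁ - z₂‖ + |ε₁ - ε₂| :=
    (Real.mul_abs_log_sub_log_le (le_min (norm_nonneg _) (norm_nonneg _))
      (by linarith [min_le_left ‖z₁‖ ‖z₂‖]) (by linarith [min_le_right ‖z₁‖ ‖z₂‖])).trans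
      (abs_add_sub_add_le_norm_sub_add_abs z₁ z₂ ε₁ ε₂)
  rw [Complex.im_conj_sub_mul_sub_mul_ofReal, abs_mul]
  calc _ ≤ |Real.log (‖z₁‖ + ε₁) - Real.log (‖z₂‖ + ε₂)| * (‖z₁ - z₂‖ * m) :=
        mul_le_mul_of_nonneg_left (Complex.abs_im_conj_sub_mul_le_norm_mul_min z₁ z₂)
          (abs_nonneg _)
    _ = ‖z₁ - z₂‖ * (m * |Real.log (‖z₁‖ + ε₁) - Real.log (‖z₂‖ + ε₂)|) := by ring
    _ ≤ ‖z₁ - z₂‖ * (‖z₁ - z₂‖ + |ε₁ - ε₂|) := by gcongr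
    _ = ‖z₁ - z₂‖ ^ 2 + |ε₁ - ε₂| * ‖z₁ - z₂‖ := by ring
end

section
/- Let θ : ℂ → ℝ be Lipschitz continuous with Lipschitz constant L, satisfying 0 ≤ θ ≤ 1, θ(z) = 1 for |z| ≤ 1 and θ(z) = 0 for |z| ≥ 2, and set g₂(z) = (1 − θ(z))·z·log(|z|²) with g₂(0) = 0. Let δ ∈ (0,1), d ≥ 1, and let ω ⊆ ℝ^d be a measurable set. Then there exists C > 0, depending only on δ and L, such that for all u, v ∈ L²(ω) and all measurable ψ : ω → ℂ with ψ ∈ L^{2/(1−δ)}(ω): ∫_ω |g₂(u(x)) − g₂(v(x))| · |ψ(x)| dx ≤ C ( ‖u‖_{L²(ω)}^δ + ‖v‖_{L²(ω)}^δ ) ‖u − v‖_{L²(ω)} ‖ψ‖_{L^{2/(1−δ)}(ω)}. -/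
/-!
Write `g₂ = (1 - θ) H` with `H z = z log |z|²`. For `|w| ≤ |z|` one splits
`H z - H w = (z - w) log |z|² + w (log |z|² - log |w|²)`; the second term is at most
`2 |z - w|` because `s log (r / s) ≤ r - s`, so `|H z - H w| ≤ (|log |z|²| + 2) |z - w|`.
Since `g₂` vanishes on the unit disc, only `|z| ≥ 1` matters, where `log |z|² ≤ 2 |z|^δ / δ`;
the cutoff contributes `|θ w - θ z| |H w| ≤ 4 L |z - w|`, as `|H| ≤ 4` on the disc of radius `2`
outside of which `θ` vanishes. This gives the pointwise bound
`|g₂ z - g₂ w| ≤ C (|z|^δ + |w|^δ) |z - w|`, and the estimate follows by integrating it against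
`|ψ|` and applying Hölder's inequality with exponents `2/δ`, `2` and `2/(1-δ)`.
-/

open MeasureTheory
open scoped ENNReal NNReal

noncomputable def mulLogNormSq (z : ℂ) : ℂ := z * (Real.log (‖z‖ ^ 2) : ℂ)

theorem norm_mulLogNormSq (z : ℂ) : ‖mulLogNormSq z‖ = ‖z‖ * |Real.log (‖z‖ ^ 2)| := by
  rw [mulLogNormSq, norm_mul, Complex.norm_real, Real.norm_eq_abs]

theorem norm_mulLogNormSq_le_four {w : ℂ} (hw : ‖w‖ ≤ 2) : ‖mulLogNormSq w‖ ≤ 4 := by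
  rw [norm_mulLogNormSq, Real.log_pow, Nat.cast_ofNat, abs_mul, abs_two]
  rcases (norm_nonneg w).eq_or_lt with hw0 | hw0
  · simp [← hw0]
  rcases le_total ‖w‖ 1 with hw1 | hw1
  · have := Real.abs_log_mul_self_lt _ hw0 hw1
    rw [abs_mul, abs_of_pos hw0] at this
    linarith
  · have := Real.log_le_sub_one_of_pos hw0
    rw [abs_of_nonneg (Real.log_nonneg hw1)]
    nlinarith

theorem abs_log_sq_le_rpow_div {r δ : ℝ} (hr : 1 ≤ r) (hδ : 0 < δ) :
    |Real.log (r ^ 2)| ≤ 2 * r ^ δ / δ := by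
  rw [Real.log_pow, Nat.cast_ofNat, abs_of_nonneg (by positivity [Real.log_nonneg hr]),
    mul_div_assoc]
  gcongr
  exact Real.log_le_rpow_div (by linarith) hδ

theorem norm_mul_abs_log_sq_sub_log_sq_le {z w : ℂ} (h : ‖w‖ ≤ ‖z‖) :
    ‖w‖ * |Real.log (‖z‖ ^ 2) - Real.log (‖w‖ ^ 2)| ≤ 2 * ‖z - w‖ := by
  rcases (norm_nonneg w).eq_or_lt with hw0 | hw0
  · rw [← hw0, zero_mul]
    positivity
  have hz0 : 0 < ‖z‖ := hw0.trans_le h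
  have hlog : (Real.log ‖z‖ - Real.log ‖w‖) * ‖w‖ ≤ ‖z‖ - ‖w‖ := by
    rw [← Real.log_div hz0.ne' hw0.ne', ← le_div_iff₀ hw0, ← div_sub_one hw0.ne']
    exact Real.log_le_sub_one_of_pos (div_pos hz0 hw0)
  have := norm_sub_norm_le z w
  rw [Real.log_pow, Real.log_pow, ← mul_sub, abs_mul,
    abs_of_nonneg (sub_nonneg.2 (Real.log_le_log hw0 h))]
  push_cast
  rw [abs_two]
  nlinarith

theorem norm_mulLogNormSq_sub_le {z w : ℂ} (h : ‖w‖ ≤ ‖z‖) :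
    ‖mulLogNormSq z - mulLogNormSq w‖ ≤ (|Real.log (‖z‖ ^ 2)| + 2) * ‖z - w‖ := by
  have hsplit : mulLogNormSq z - mulLogNormSq w = (z - w) * (Real.log (‖z‖ ^ 2) : ℂ) +
      w * ((Real.log (‖z‖ ^ 2) - Real.log (‖w‖ ^ 2) : ℝ) : ℂ) := by
    push_cast [mulLogNormSq]
    ring
  calc ‖mulLogNormSq z - mulLogNormSq w‖
      ≤ ‖z - w‖ * |Real.log (‖z‖ ^ 2)| +
          ‖w‖ * |Real.log (‖z‖ ^ 2) - Real.log (‖w‖ ^ 2)| := by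
        rw [hsplit]
        refine (norm_add_le _ _).trans_eq ?_
        simp only [norm_mul, Complex.norm_real, Real.norm_eq_abs]
    _ ≤ ‖z - w‖ * |Real.log (‖z‖ ^ 2)| + 2 * ‖z - w‖ := by
        gcongr _ + ?_
        exact norm_mul_abs_log_sq_sub_log_sq_le h
    _ = (|Real.log (‖z‖ ^ 2)| + 2) * ‖z - w‖ := by ring

structure IsCutoff (L : ℝ≥0) (θ : ℂ → ℝ) : Prop where
  lipschitzWith : LipschitzWith L θ
  nonneg : ∀ z, 0 ≤ θ z
  le_one : ∀ z, θ z ≤ 1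
  eq_one : ∀ z : ℂ, ‖z‖ ≤ 1 → θ z = 1
  eq_zero : ∀ z : ℂ, 2 ≤ ‖z‖ → θ z = 0

/-- The nonlinearity `g₂`, written exactly as it occurs in the integrand of the estimate. -/
noncomputable def cutoffMulLogNormSq (θ : ℂ → ℝ) (z : ℂ) : ℂ :=
  (((1 : ℝ) - θ z : ℝ) : ℂ) * z * (Real.log (‖z‖ ^ 2) : ℂ)

theorem cutoffMulLogNormSq_sub_eq (θ : ℂ → ℝ) (z w : ℂ) :
    cutoffMulLogNormSq θ z - cutoffMulLogNormSq θ w =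
      ((1 - θ z : ℝ) : ℂ) * (mulLogNormSq z - mulLogNormSq w) +
        ((θ w - θ z : ℝ) : ℂ) * mulLogNormSq w := by
  push_cast [cutoffMulLogNormSq, mulLogNormSq]
  ring

namespace IsCutoff

variable {L : ℝ≥0} {θ : ℂ → ℝ}

theorem norm_cutoffMulLogNormSq_sub_le_of_norm_le (hθ : IsCutoff L θ) {δ : ℝ} (hδ : 0 < δ)
    {z w : ℂ} (h : ‖w‖ ≤ ‖z‖) :
    ‖cutoffMulLogNormSq θ z - cutoffMulLogNormSq θ w‖ ≤
      (2 / δ + 2 + 4 * L) * ‖z‖ ^ δ * ‖z - w‖ := by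
  rcases le_or_gt ‖z‖ 1 with hz1 | hz1
  · simp only [cutoffMulLogNormSq, hθ.eq_one z hz1, hθ.eq_one w (h.trans hz1), sub_self,
      Complex.ofReal_zero, zero_mul, norm_zero]
    positivity
  have hzδ : 1 ≤ ‖z‖ ^ δ := Real.one_le_rpow hz1.le hδ.le
  have hmain : ‖((1 - θ z : ℝ) : ℂ) * (mulLogNormSq z - mulLogNormSq w)‖ ≤
      (2 / δ + 2) * ‖z‖ ^ δ * ‖z - w‖ := by
    have h1θ : |1 - θ z| ≤ 1 := abs_le.2 ⟨by linarith [hθ.le_one z], by linarith [hθ.nonneg z]⟩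
    rw [norm_mul, Complex.norm_real, Real.norm_eq_abs]
    calc |1 - θ z| * ‖mulLogNormSq z - mulLogNormSq w‖
        ≤ ‖mulLogNormSq z - mulLogNormSq w‖ := mul_le_of_le_one_left (norm_nonneg _) h1θ
      _ ≤ (|Real.log (‖z‖ ^ 2)| + 2) * ‖z - w‖ := norm_mulLogNormSq_sub_le h
      _ ≤ (2 * ‖z‖ ^ δ / δ + 2 * ‖z‖ ^ δ) * ‖z - w‖ := by
          gcongr
          exacts [abs_log_sq_le_rpow_div hz1.le hδ, by linarith]
      _ = (2 / δ + 2) * ‖z‖ ^ δ * ‖z - w‖ := by ring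
  have hcutoff : ‖((θ w - θ z : ℝ) : ℂ) * mulLogNormSq w‖ ≤ 4 * L * ‖z‖ ^ δ * ‖z - w‖ := by
    rcases le_or_gt 2 ‖w‖ with hw2 | hw2
    · simp only [hθ.eq_zero w hw2, hθ.eq_zero z (hw2.trans h), sub_self, Complex.ofReal_zero,
        zero_mul, norm_zero]
      positivity
    rw [norm_mul, Complex.norm_real, ← dist_eq_norm]
    calc dist (θ w) (θ z) * ‖mulLogNormSq w‖ ≤ L * dist w z * 4 :=
          mul_le_mul (hθ.lipschitzWith.dist_le_mul w z) (norm_mulLogNormSq_le_four hw2.le)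
            (norm_nonneg _) (by positivity)
      _ = 4 * L * 1 * ‖z - w‖ := by rw [dist_comm, dist_eq_norm]; ring
      _ ≤ 4 * L * ‖z‖ ^ δ * ‖z - w‖ := by gcongr
  rw [cutoffMulLogNormSq_sub_eq]
  refine (norm_add_le _ _).trans ?_
  linarith

theorem norm_cutoffMulLogNormSq_sub_le (hθ : IsCutoff L θ) {δ : ℝ} (hδ : 0 < δ) (z w : ℂ) :
    ‖cutoffMulLogNormSq θ z - cutoffMulLogNormSq θ w‖ ≤
      (2 / δ + 2 + 4 * L) * (‖z‖ ^ δ + ‖w‖ ^ δ) * ‖z - w‖ := by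
  have hz : 0 ≤ ‖z‖ ^ δ := by positivity
  have hw : 0 ≤ ‖w‖ ^ δ := by positivity
  rcases le_total ‖w‖ ‖z‖ with h | h
  · refine (hθ.norm_cutoffMulLogNormSq_sub_le_of_norm_le hδ h).trans ?_
    gcongr
    linarith
  · rw [norm_sub_rev, norm_sub_rev z]
    refine (hθ.norm_cutoffMulLogNormSq_sub_le_of_norm_le hδ h).trans ?_
    gcongr
    linarith

end IsCutoff

namespace MeasureTheory

variable {α : Type*} [MeasurableSpace α] {μ : Measure α}

theorem lintegral_enorm_mul_mul_le_eLpNorm_mul_mul {ε₁ ε₂ ε₃ : Type*}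
    [TopologicalSpace ε₁] [ContinuousENorm ε₁] [TopologicalSpace ε₂] [ContinuousENorm ε₂]
    [TopologicalSpace ε₃] [ContinuousENorm ε₃] {f : α → ε₁} {g : α → ε₂} {h : α → ε₃}
    (hf : AEStronglyMeasurable f μ) (hg : AEStronglyMeasurable g μ)
    (hh : AEStronglyMeasurable h μ) {p q r : ℝ} (hp : 0 < p) (hq : 0 < q) (hr : 0 < r)
    (hpqr : p⁻¹ + q⁻¹ + r⁻¹ = 1) :
    ∫⁻ x, ‖f x‖ₑ * ‖g x‖ₑ * ‖h x‖ₑ ∂μ ≤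
      eLpNorm f (.ofReal p) μ * eLpNorm g (.ofReal q) μ * eLpNorm h (.ofReal r) μ := by
  have holder := ENNReal.lintegral_prod_norm_pow_le (μ := μ) Finset.univ
    (f := ![(‖f ·‖ₑ ^ p), (‖g ·‖ₑ ^ q), (‖h ·‖ₑ ^ r)]) (p := ![p⁻¹, q⁻¹, r⁻¹])
    (by
      intro i _
      fin_cases i
      exacts [hf.enorm.pow_const p, hg.enorm.pow_const q, hh.enorm.pow_const r])
    (by simpa [Fin.sum_univ_three] using hpqr)
    (by intro i _; fin_cases i <;> simp [hp.le, hq.le, hr.le])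
  simp only [Fin.prod_univ_three, Matrix.cons_val_zero, Matrix.cons_val_one,
    Matrix.cons_val_two, Matrix.tail_cons, Matrix.head_cons, ← ENNReal.rpow_mul,
    mul_inv_cancel₀ hp.ne', mul_inv_cancel₀ hq.ne', mul_inv_cancel₀ hr.ne',
    ENNReal.rpow_one] at holder
  simpa [eLpNorm_eq_lintegral_rpow_enorm_toReal, hp, hq, hr, one_div,
    ENNReal.toReal_ofReal hp.le, ENNReal.toReal_ofReal hq.le, ENNReal.toReal_ofReal hr.le]
    using holder

variable {E F G : Type*} [NormedAddCommGroup E] [NormedAddCommGroup F] [NormedAddCommGroup G]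

theorem lintegral_rpow_enorm_mul_mul_le {u : α → E} {w : α → F} {ψ : α → G}
    (hu : AEStronglyMeasurable u μ) (hw : AEStronglyMeasurable w μ)
    (hψ : AEStronglyMeasurable ψ μ) {δ : ℝ} (hδ : δ ∈ Set.Ioo (0 : ℝ) 1) :
    ∫⁻ x, ‖u x‖ₑ ^ δ * ‖w x‖ₑ * ‖ψ x‖ₑ ∂μ ≤
      eLpNorm u 2 μ ^ δ * eLpNorm w 2 μ * eLpNorm ψ (.ofReal (2 / (1 - δ))) μ := by
  obtain ⟨hδ0, hδ1⟩ := hδ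
  have holder := lintegral_enorm_mul_mul_le_eLpNorm_mul_mul
    (hu.enorm.pow_const δ).aestronglyMeasurable hw hψ (p := 2 / δ) (q := 2) (r := 2 / (1 - δ))
    (by positivity) two_pos (div_pos two_pos (sub_pos.2 hδ1)) (by field_simp; ring)
  rwa [eLpNorm_enorm_rpow u hδ0, ← ENNReal.ofReal_mul (by positivity),
    div_mul_cancel₀ _ hδ0.ne', ENNReal.ofReal_ofNat] at holder

theorem lintegral_enorm_sub_mul_le_of_norm_sub_le {φ : E → F} {C δ : ℝ}
    (hδ : δ ∈ Set.Ioo (0 : ℝ) 1) (hφ : ∀ z w, ‖φ z - φ w‖ ≤ C * (‖z‖ ^ δ + ‖w‖ ^ δ) * ‖z - w‖)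
    {u v : α → E} {ψ : α → G} (hu : AEStronglyMeasurable u μ) (hv : AEStronglyMeasurable v μ)
    (hψ : AEStronglyMeasurable ψ μ) :
    ∫⁻ x, ‖φ (u x) - φ (v x)‖ₑ * ‖ψ x‖ₑ ∂μ ≤
      .ofReal C * (eLpNorm u 2 μ ^ δ + eLpNorm v 2 μ ^ δ) * eLpNorm (u - v) 2 μ *
        eLpNorm ψ (.ofReal (2 / (1 - δ))) μ := by
  have hpt (z w : E) : ‖φ z - φ w‖ₑ ≤ .ofReal C * (‖z‖ₑ ^ δ + ‖w‖ₑ ^ δ) * ‖z - w‖ₑ := by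
    simp only [← ofReal_norm]
    rw [ENNReal.ofReal_rpow_of_nonneg (norm_nonneg _) hδ.1.le,
      ENNReal.ofReal_rpow_of_nonneg (norm_nonneg _) hδ.1.le,
      ← ENNReal.ofReal_add (by positivity) (by positivity), ← ENNReal.ofReal_mul' (by positivity),
      ← ENNReal.ofReal_mul' (norm_nonneg _)]
    exact ENNReal.ofReal_le_ofReal (hφ z w)
  calc ∫⁻ x, ‖φ (u x) - φ (v x)‖ₑ * ‖ψ x‖ₑ ∂μ
      ≤ ∫⁻ x, .ofReal C * (‖u x‖ₑ ^ δ * ‖(u - v) x‖ₑ * ‖ψ x‖ₑ +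
          ‖v x‖ₑ ^ δ * ‖(u - v) x‖ₑ * ‖ψ x‖ₑ) ∂μ := by
        refine lintegral_mono fun x => (mul_le_mul_left (hpt (u x) (v x)) _).trans_eq ?_
        rw [Pi.sub_apply]
        ring
    _ = .ofReal C * (∫⁻ x, ‖u x‖ₑ ^ δ * ‖(u - v) x‖ₑ * ‖ψ x‖ₑ ∂μ +
          ∫⁻ x, ‖v x‖ₑ ^ δ * ‖(u - v) x‖ₑ * ‖ψ x‖ₑ ∂μ) := by
        rw [lintegral_const_mul' _ _ ENNReal.ofReal_ne_top, lintegral_add_left']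
        exact ((hu.enorm.pow_const δ).mul (hu.sub hv).enorm).mul hψ.enorm
    _ ≤ .ofReal C * (eLpNorm u 2 μ ^ δ * eLpNorm (u - v) 2 μ * eLpNorm ψ (.ofReal (2 / (1 - δ))) μ +
          eLpNorm v 2 μ ^ δ * eLpNorm (u - v) 2 μ * eLpNorm ψ (.ofReal (2 / (1 - δ))) μ) := by
        gcongr
        exacts [lintegral_rpow_enorm_mul_mul_le hu (hu.sub hv) hψ hδ,
          lintegral_rpow_enorm_mul_mul_le hv (hu.sub hv) hψ hδ]
    _ = _ := by ring

end MeasureTheory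

/-- With `θ` an `L`-Lipschitz cutoff as before and `g₂(z) = (1-θ(z)) z log(|z|²)`,
for every `δ ∈ (0,1)` there is `C > 0` depending only on `δ` and `L` such that for every
`d ≥ 1`, every measurable `ω ⊆ ℝ^d`, all `u, v ∈ L²(ω)` and every measurable
`ψ ∈ L^{2/(1-δ)}(ω)`,
`∫_ω |g₂∘u - g₂∘v| |ψ| ≤ C (‖u‖_{L²}^δ + ‖v‖_{L²}^δ) ‖u - v‖_{L²} ‖ψ‖_{L^{2/(1-δ)}}`. -/
theorem g_two_dual_estimate (δ : ℝ) (hδ : δ ∈ Set.Ioo (0 : ℝ) 1) (L : NNReal) :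
    ∃ C : ℝ, 0 < C ∧
      ∀ θ : ℂ → ℝ, LipschitzWith L θ →
        (∀ z : ℂ, 0 ≤ θ z ∧ θ z ≤ 1) →
        (∀ z : ℂ, ‖z‖ ≤ 1 → θ z = 1) →
        (∀ z : ℂ, 2 ≤ ‖z‖ → θ z = 0) →
        ∀ (d : ℕ), 1 ≤ d →
        ∀ ω : Set (EuclideanSpace ℝ (Fin d)), MeasurableSet ω →
        ∀ u v ψ : EuclideanSpace ℝ (Fin d) → ℂ,
          MemLp u 2 (volume.restrict ω) → MemLp v 2 (volume.restrict ω) →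
          MemLp ψ (ENNReal.ofReal (2 / (1 - δ))) (volume.restrict ω) →
          (∫⁻ x in ω,
              ‖((1 : ℝ) - θ (u x) : ℝ) * u x * (Real.log (‖u x‖ ^ 2) : ℂ)
                - ((1 : ℝ) - θ (v x) : ℝ) * v x * (Real.log (‖v x‖ ^ 2) : ℂ)‖₊
                * ‖ψ x‖₊ ∂volume)
            ≤ ENNReal.ofReal (C *
                ((eLpNorm u 2 (volume.restrict ω)).toReal ^ δ
                  + (eLpNorm v 2 (volume.restrict ω)).toReal ^ δ) *
                (eLpNorm (fun x => u x - v x) 2 (volume.restrict ω)).toReal *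
                (eLpNorm ψ (ENNReal.ofReal (2 / (1 - δ))) (volume.restrict ω)).toReal) := by
  have hδ0 := hδ.1
  have hC : 0 < 2 / δ + 2 + 4 * (L : ℝ) := by positivity
  refine ⟨_, hC, fun θ hlip hθ01 hone htwo d _ ω _ u v ψ hu hv hψ => ?_⟩
  have hθ : IsCutoff L θ := ⟨hlip, fun z => (hθ01 z).1, fun z => (hθ01 z).2, hone, htwo⟩
  set μ := volume.restrict ω
  have hu' := hu.eLpNorm_ne_top
  have hv' := hv.eLpNorm_ne_top
  have hfin : ENNReal.ofReal (2 / δ + 2 + 4 * L) * (eLpNorm u 2 μ ^ δ + eLpNorm v 2 μ ^ δ) *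
      eLpNorm (u - v) 2 μ * eLpNorm ψ (ENNReal.ofReal (2 / (1 - δ))) μ ≠ ∞ := by
    finiteness [(hu.sub hv).eLpNorm_ne_top, hψ.eLpNorm_ne_top]
  calc _ ≤ _ := lintegral_enorm_sub_mul_le_of_norm_sub_le hδ
          (hθ.norm_cutoffMulLogNormSq_sub_le hδ0)
          hu.aestronglyMeasurable hv.aestronglyMeasurable hψ.aestronglyMeasurable
    _ = _ := by
      rw [← ENNReal.ofReal_toReal hfin, ENNReal.toReal_mul, ENNReal.toReal_mul,
        ENNReal.toReal_mul, ENNReal.toReal_ofReal hC.le,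
        ENNReal.toReal_add (ENNReal.rpow_ne_top_of_nonneg hδ0.le hu')
          (ENNReal.rpow_ne_top_of_nonneg hδ0.le hv'), ENNReal.toReal_rpow, ENNReal.toReal_rpow]
      rfl
end
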